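/- arXiv:math/0611270 — 3 statements merged into one kernel-verified Lean document; each statement's English description precedes it below -/
import Mathlib

section
/- The greatest convex minorant operator is nonexpansive in the sup norm: for functions h, r : O → ℝ with h and h + r bounded below on an interval O, sup_{t ∈ O} |T_O(h + r)(t) − T_O(h)(t)| ≤ sup_{t ∈ O} |r(t)|. -/
open Set

noncomputable def gcm (O : Set ℝ) (x : ℝ → ℝ) (t : ℝ) : ℝ :=
  sSup {v : ℝ | ∃ z : ℝ → ℝ, ConvexOn ℝ O z ∧ (∀ s ∈ O, z s ≤ x s) ∧ v = z t}

section GreatestConvexMinorant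

variable {O : Set ℝ} {x y z : ℝ → ℝ} {t : ℝ}

lemma le_gcm (ht : t ∈ O) (hz : ConvexOn ℝ O z) (hzx : ∀ s ∈ O, z s ≤ x s) :
    z t ≤ gcm O x t :=
  le_csSup ⟨x t, by rintro _ ⟨w, -, hwx, rfl⟩; exact hwx t ht⟩ ⟨z, hz, hzx, rfl⟩

lemma gcm_le_of_forall (hO : Convex ℝ O) (hbdd : ∃ m : ℝ, ∀ s ∈ O, m ≤ x s) {c : ℝ}
    (hc : ∀ z : ℝ → ℝ, ConvexOn ℝ O z → (∀ s ∈ O, z s ≤ x s) → z t ≤ c) :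
    gcm O x t ≤ c := by
  obtain ⟨m, hm⟩ := hbdd
  refine csSup_le ⟨m, fun _ => m, convexOn_const m hO, hm, rfl⟩ ?_
  rintro _ ⟨z, hz, hzx, rfl⟩
  exact hc z hz hzx

lemma gcm_sub_le_gcm (hO : Convex ℝ O) (hbdd : ∃ m : ℝ, ∀ s ∈ O, m ≤ x s) (ht : t ∈ O)
    {C : ℝ} (hxy : ∀ s ∈ O, x s - C ≤ y s) :
    gcm O x t - C ≤ gcm O y t := by
  rw [sub_le_iff_le_add]
  refine gcm_le_of_forall hO hbdd fun z hz hzx => ?_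
  have hzC : z t - C ≤ gcm O y t :=
    le_gcm (z := fun s => z s - C) ht (hz.sub (concaveOn_const C hO))
      fun s hs => (sub_le_sub_right (hzx s hs) C).trans (hxy s hs)
  linarith

end GreatestConvexMinorant

/-- The greatest convex minorant operator is nonexpansive in the sup norm: if
`|r| ≤ C` on `O` then `|T_O(h+r) - T_O(h)| ≤ C` on `O`. -/
theorem gcm_nonexpansive (O : Set ℝ) (hO : Convex ℝ O) (h r : ℝ → ℝ)
    (hbdd₁ : ∃ m : ℝ, ∀ t ∈ O, m ≤ h t)
    (hbdd₂ : ∃ m : ℝ, ∀ t ∈ O, m ≤ h t + r t)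
    (C : ℝ) (hC : ∀ t ∈ O, |r t| ≤ C) :
    ∀ t ∈ O, |gcm O (fun s => h s + r s) t - gcm O h t| ≤ C := by
  intro t ht
  rw [abs_sub_le_iff]
  constructor
  · refine sub_le_comm.mp (gcm_sub_le_gcm hO hbdd₂ ht fun s hs => ?_)
    linarith [(abs_le.mp (hC s hs)).2]
  · refine sub_le_comm.mp (gcm_sub_le_gcm hO hbdd₁ ht fun s hs => ?_)
    linarith [(abs_le.mp (hC s hs)).1]
end

section
/- Let (g_n) be a sequence of convex functions on ℝ with g_n(0) = 0 for all n, and suppose that for a constant A > 0 and p > 1, sup_{|s| ≤ c} |g_n(s) − A|s|^p| → 0 as n → ∞ for every c > 0. Then for every κ > 0 there exists τ < ∞ such that liminf_{n→∞} inf_{|s| ≥ τ} (g_n(s) − κ|s|) ≥ 0. -/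
open Set Filter

/-!
Since `A|s|^p` grows superlinearly, some `τ ≥ 1` has `A τ^p ≥ 2κτ`; uniform convergence on
`[-τ, τ]` then gives `g_n ≥ κτ` on `{±τ}` for all large `n`. A convex function vanishing at `0`
has `g(s)/|s|` nondecreasing along rays, so this propagates to `g_n(s) ≥ κ|s|` for `|s| ≥ τ`.
-/

theorem ConvexOn.map_smul_le_smul_of_map_zero {E : Type*} [AddCommGroup E] [Module ℝ E]
    {s : Set E} {f : E → ℝ} (hf : ConvexOn ℝ s f) (h0s : (0 : E) ∈ s) (hf0 : f 0 = 0)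
    {x : E} (hx : x ∈ s) {θ : ℝ} (hθ0 : 0 ≤ θ) (hθ1 : θ ≤ 1) :
    f (θ • x) ≤ θ * f x := by
  have := hf.2 hx h0s hθ0 (sub_nonneg.2 hθ1) (add_sub_cancel θ 1)
  simpa only [smul_zero, add_zero, hf0, smul_eq_mul, mul_zero] using this

theorem ConvexOn.mul_norm_le_of_mul_le_on_sphere {E : Type*} [NormedAddCommGroup E]
    [NormedSpace ℝ E] {f : E → ℝ} (hf : ConvexOn ℝ univ f) (hf0 : f 0 = 0) {κ r : ℝ}
    (hr : 0 < r) (hsphere : ∀ x, ‖x‖ = r → κ * r ≤ f x) {s : E} (hs : r ≤ ‖s‖) :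
    κ * ‖s‖ ≤ f s := by
  have hs0 : 0 < ‖s‖ := hr.trans_le hs
  set θ := r / ‖s‖
  have hθ : θ * ‖s‖ = r := div_mul_cancel₀ r hs0.ne'
  have hnorm : ‖θ • s‖ = r := by
    rw [norm_smul, Real.norm_of_nonneg (by positivity), hθ]
  have hray : f (θ • s) ≤ θ * f s :=
    hf.map_smul_le_smul_of_map_zero (mem_univ 0) hf0 (mem_univ s) (by positivity)
      ((div_le_one hs0).2 hs)
  have key : θ * (κ * ‖s‖) ≤ θ * f s := by
    calc θ * (κ * ‖s‖) = κ * r := by rw [← hθ]; ring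
      _ ≤ f (θ • s) := hsphere _ hnorm
      _ ≤ θ * f s := hray
  exact le_of_mul_le_mul_left key (by positivity)

theorem eventually_mul_le_mul_rpow_atTop {A p : ℝ} (hA : 0 < A) (hp : 1 < p) (c : ℝ) :
    ∀ᶠ τ in atTop, c * τ ≤ A * τ ^ p := by
  filter_upwards [(tendsto_rpow_atTop (sub_pos.2 hp)).eventually_ge_atTop (c / A),
    eventually_gt_atTop 0] with τ hτp hτ
  calc c * τ = A * (c / A) * τ := by field_simp
    _ ≤ A * τ ^ (p - 1) * τ := by gcongr
    _ = A * τ ^ p := by rw [mul_assoc, ← Real.rpow_add_one hτ.ne', sub_add_cancel]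

/-- If convex functions `g n` with `g n 0 = 0` converge uniformly on compacts to
`s ↦ A|s|^p` with `A > 0`, `p > 1`, then for every `κ > 0` there is `τ` with
`liminf_n inf_{|s| ≥ τ} (g n s - κ|s|) ≥ 0`. -/
theorem convex_linear_lower_bound (g : ℕ → ℝ → ℝ)
    (hconv : ∀ n, ConvexOn ℝ Set.univ (g n)) (h0 : ∀ n, g n 0 = 0)
    (A p : ℝ) (hA : 0 < A) (hp : 1 < p)
    (hconvg : ∀ c > (0 : ℝ), ∀ ε > (0 : ℝ), ∃ N : ℕ, ∀ n ≥ N, ∀ s : ℝ,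
      |s| ≤ c → |g n s - A * |s| ^ p| ≤ ε) :
    ∀ κ > (0 : ℝ), ∃ τ : ℝ, ∀ ε > (0 : ℝ), ∃ N : ℕ, ∀ n ≥ N, ∀ s : ℝ,
      τ ≤ |s| → -ε ≤ g n s - κ * |s| := by
  intro κ hκ
  obtain ⟨τ, hgrowth, hτ1⟩ :=
    ((eventually_mul_le_mul_rpow_atTop hA hp (2 * κ)).and (eventually_ge_atTop 1)).exists
  have hτ : 0 < τ := one_pos.trans_le hτ1
  obtain ⟨N, hN⟩ := hconvg τ hτ κ hκ
  refine ⟨τ, fun _ _ => ⟨N, fun n hn s hs => ?_⟩⟩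
  have hsphere : ∀ x : ℝ, ‖x‖ = τ → κ * τ ≤ g n x := by
    intro x hx
    rw [Real.norm_eq_abs] at hx
    have hclose := (abs_le.1 (hN n hn x hx.le)).1
    rw [hx] at hclose
    linarith [le_mul_of_one_le_right hκ.le hτ1]
  have hlin := (hconv n).mul_norm_le_of_mul_le_on_sphere (h0 n) hτ hsphere
    (s := s) (by rwa [Real.norm_eq_abs])
  rw [Real.norm_eq_abs] at hlin
  linarith
end

section
/- Let φ denote the standard Gaussian density, F a distribution function, g measurable, and for k ≥ 1 let η_k(t) = ∫ (1_{g(u) ≤ t} − F(t)) h_k(u) φ(u) du, where h_k is the k-th Hermite polynomial with ∫ h_k² φ = k!. Then for any t₀ and δ > 0, (η_k(t₀+δ) − η_k(t₀))² ≤ k! · (F(t₀+δ) − F(t₀)), provided F is the distribution function of g(ξ) with ξ standard Gaussian. -/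
/-!
Under the standard Gaussian measure `γ`, `F t = γ {g ≤ t}` and, since `∫ h_k dγ = 0` for
`k ≥ 1`, the centering term drops out of `η_k`: `η_k t = ∫_{g ≤ t} h_k dγ`. The increment
`η_k (t₀ + δ) - η_k t₀` is therefore the integral of `h_k` over `A = {t₀ < g ≤ t₀ + δ}`, and
Cauchy–Schwarz bounds its square by `γ A * ∫ h_k² dγ = (F (t₀ + δ) - F t₀) * k!`.

Both Hermite moments follow from Gaussian integration by parts, `∫ p' dγ = ∫ x p dγ`, and the
recurrence `h_{n+1} = x h_n - h_n'`, which together give `∫ p h_n dγ = ∫ p⁽ⁿ⁾ dγ`.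
-/

open Set MeasureTheory

section CauchySchwarz

variable {α : Type*} [MeasurableSpace α] {μ : Measure α}

lemma MemLp.inner_toLp_eq_integral_mul {f g : α → ℝ} (hf : MemLp f 2 μ) (hg : MemLp g 2 μ) :
    inner ℝ (hf.toLp f) (hg.toLp g) = ∫ x, f x * g x ∂μ := by
  rw [L2.inner_def]
  refine integral_congr_ae ?_
  filter_upwards [hf.coeFn_toLp, hg.coeFn_toLp] with x hfx hgx
  rw [hfx, hgx, real_inner_eq_re_inner, RCLike.inner_apply]
  simp [mul_comm]

theorem sq_integral_mul_le_integral_sq_mul_integral_sq {f g : α → ℝ} (hf : MemLp f 2 μ)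
    (hg : MemLp g 2 μ) :
    (∫ x, f x * g x ∂μ) ^ 2 ≤ (∫ x, f x ^ 2 ∂μ) * ∫ x, g x ^ 2 ∂μ := by
  simpa only [MemLp.inner_toLp_eq_integral_mul, ← sq] using
    real_inner_mul_inner_self_le (hf.toLp f) (hg.toLp g)

theorem sq_setIntegral_le_measureReal_mul_integral_sq [IsFiniteMeasure μ] (s : Set α)
    {f : α → ℝ} (hf : MemLp f 2 μ) :
    (∫ x in s, f x ∂μ) ^ 2 ≤ μ.real s * ∫ x, f x ^ 2 ∂μ := by
  have hs := sq_integral_mul_le_integral_sq_mul_integral_sq (μ := μ.restrict s)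
    (memLp_const 1) (hf.restrict s)
  simp only [one_mul, one_pow, integral_const, smul_eq_mul, mul_one,
    measureReal_restrict_apply_univ] at hs
  refine hs.trans (mul_le_mul_of_nonneg_left ?_ measureReal_nonneg)
  exact setIntegral_le_integral (hf.integrable_sq) (ae_of_all _ fun x => sq_nonneg (f x))

theorem sq_setIntegral_sub_setIntegral_le [IsFiniteMeasure μ] {s t : Set α} (hst : s ⊆ t)
    (hs : MeasurableSet s) {f : α → ℝ} (hf : MemLp f 2 μ) :
    (∫ x in t, f x ∂μ - ∫ x in s, f x ∂μ) ^ 2 ≤ (μ.real t - μ.real s) * ∫ x, f x ^ 2 ∂μ := by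
  rw [← setIntegral_sdiff hs (hf.integrable one_le_two).integrableOn hst,
    ← measureReal_sdiff hst hs]
  exact sq_setIntegral_le_measureReal_mul_integral_sq _ hf

end CauchySchwarz

open ProbabilityTheory Polynomial Real

lemma gaussianPDFReal_zero_one (x : ℝ) :
    gaussianPDFReal 0 1 x = Real.exp (-x ^ 2 / 2) / √(2 * π) := by
  simp [gaussianPDFReal, div_eq_inv_mul]

lemma integral_gaussianReal_zero_one_eq_integral_mul {f : ℝ → ℝ} :
    ∫ x, f x ∂gaussianReal 0 1 = ∫ x, f x * (Real.exp (-x ^ 2 / 2) / √(2 * π)) := by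
  simp_rw [integral_gaussianReal_eq_integral_smul one_ne_zero, gaussianPDFReal_zero_one,
    smul_eq_mul, mul_comm]

lemma hasDerivAt_gaussianPDFReal_zero_one (x : ℝ) :
    HasDerivAt (gaussianPDFReal 0 1) (-x * gaussianPDFReal 0 1 x) x := by
  have h : HasDerivAt (fun y : ℝ => -y ^ 2 / 2) (-x) x :=
    ((hasDerivAt_pow 2 x).neg.div_const 2).congr_deriv (by ring)
  simp_rw [funext gaussianPDFReal_zero_one]
  exact (h.exp.div_const (√(2 * π))).congr_deriv (by ring)

lemma integrable_eval_gaussianReal (p : ℝ[X]) (m : ℝ) (v : NNReal) :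
    Integrable (fun x => p.eval x) (gaussianReal m v) := by
  simp_rw [eval_eq_sum_range]
  refine integrable_finsetSum _ fun i _ => Integrable.const_mul ?_ _
  refine (memLp_id_gaussianReal (μ := m) (v := v) i).integrable_norm_pow'.mono' (by fun_prop) ?_
  exact ae_of_all _ fun x => by simp

lemma memLp_eval_gaussianReal (p : ℝ[X]) (m : ℝ) (v : NNReal) :
    MemLp (fun x => p.eval x) 2 (gaussianReal m v) :=
  (memLp_two_iff_integrable_sq (by fun_prop)).2 <| by
    simpa only [eval_mul, sq] using integrable_eval_gaussianReal (p * p) m v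

lemma integrable_mul_gaussianPDFReal_iff {m : ℝ} {v : NNReal} (hv : v ≠ 0) {f : ℝ → ℝ} :
    Integrable (fun x => f x * gaussianPDFReal m v x) ↔ Integrable f (gaussianReal m v) := by
  rw [gaussianReal_of_var_ne_zero _ hv, integrable_withDensity_iff_integrable_smul'
    (measurable_gaussianPDF _ _) (ae_of_all _ fun _ => gaussianPDF_lt_top)]
  simp_rw [toReal_gaussianPDF, smul_eq_mul, mul_comm]

namespace Polynomial

noncomputable def stdGaussianIntegral : ℝ[X] →ₗ[ℝ] ℝ where
  toFun p := ∫ x, p.eval x ∂gaussianReal 0 1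
  map_add' p q := by
    simp only [eval_add]
    exact integral_add (integrable_eval_gaussianReal p 0 1) (integrable_eval_gaussianReal q 0 1)
  map_smul' c p := by simp [integral_const_mul]

lemma stdGaussianIntegral_apply (p : ℝ[X]) :
    stdGaussianIntegral p = ∫ x, p.eval x ∂gaussianReal 0 1 := rfl

-- Stein's identity: no boundary terms, as `p * gaussianPDFReal 0 1` and its derivative are
-- integrable.
lemma stdGaussianIntegral_derivative (p : ℝ[X]) :
    stdGaussianIntegral (derivative p) = stdGaussianIntegral (X * p) := by
  have hderiv (x : ℝ) : HasDerivAt (fun y => p.eval y * gaussianPDFReal 0 1 y)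
      ((derivative p - X * p).eval x * gaussianPDFReal 0 1 x) x :=
    ((p.hasDerivAt x).mul (hasDerivAt_gaussianPDFReal_zero_one x)).congr_deriv (by simp only [eval_sub, eval_mul, eval_X]; ring)
  have hint (q : ℝ[X]) : Integrable (fun x => q.eval x * gaussianPDFReal 0 1 x) :=
    (integrable_mul_gaussianPDFReal_iff one_ne_zero).2 (integrable_eval_gaussianReal q 0 1)
  have h := integral_eq_zero_of_hasDerivAt_of_integrable hderiv (hint _) (hint p)
  rw [← sub_eq_zero, ← map_sub, stdGaussianIntegral_apply,
    integral_gaussianReal_eq_integral_smul one_ne_zero]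
  simpa only [smul_eq_mul, mul_comm] using h

noncomputable def realHermite (n : ℕ) : ℝ[X] := (hermite n).map (algebraMap ℤ ℝ)

lemma aeval_hermite (n : ℕ) (x : ℝ) : aeval x (hermite n) = (realHermite n).eval x :=
  (eval_map_algebraMap _ _).symm

lemma realHermite_succ (n : ℕ) :
    realHermite (n + 1) = X * realHermite n - derivative (realHermite n) := by
  simp [realHermite, hermite_succ, derivative_map]

lemma stdGaussianIntegral_mul_realHermite_succ (p : ℝ[X]) (n : ℕ) :
    stdGaussianIntegral (p * realHermite (n + 1))
      = stdGaussianIntegral (derivative p * realHermite n) := by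
  have h := stdGaussianIntegral_derivative (p * realHermite n)
  rw [realHermite_succ, mul_sub, map_sub, ← mul_left_comm, ← h, derivative_mul, map_add]
  ring

lemma stdGaussianIntegral_mul_realHermite (p : ℝ[X]) (n : ℕ) :
    stdGaussianIntegral (p * realHermite n) = stdGaussianIntegral (derivative^[n] p) := by
  induction n generalizing p with
  | zero => simp [realHermite]
  | succ n ih => rw [stdGaussianIntegral_mul_realHermite_succ, ih, Function.iterate_succ_apply]

lemma integral_eval_realHermite {n : ℕ} (hn : n ≠ 0) :
    ∫ x, (realHermite n).eval x ∂gaussianReal 0 1 = 0 := by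
  obtain ⟨m, rfl⟩ := Nat.exists_eq_succ_of_ne_zero hn
  simpa [stdGaussianIntegral_apply, Function.iterate_succ_apply] using
    stdGaussianIntegral_mul_realHermite 1 (m + 1)

lemma iterate_derivative_eq_C_of_natDegree_le {R : Type*} [Semiring R] {p : R[X]} {n : ℕ}
    (hp : p.natDegree ≤ n) : derivative^[n] p = C (n.factorial • p.coeff n) := by
  have hdeg : (derivative^[n] p).natDegree ≤ 0 :=
    (natDegree_iterate_derivative p n).trans (Nat.sub_eq_zero_of_le hp).le
  rw [eq_C_of_natDegree_le_zero hdeg, coeff_iterate_derivative, zero_add, Nat.descFactorial_self]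

lemma iterate_derivative_realHermite_self (n : ℕ) :
    derivative^[n] (realHermite n) = C (n.factorial : ℝ) := by
  rw [realHermite, iterate_derivative_map, iterate_derivative_eq_C_of_natDegree_le
    natDegree_hermite.le, coeff_hermite_self]
  simp

lemma integral_eval_realHermite_sq (n : ℕ) :
    ∫ x, (realHermite n).eval x ^ 2 ∂gaussianReal 0 1 = n.factorial := by
  have h := stdGaussianIntegral_mul_realHermite (realHermite n) n
  rw [iterate_derivative_realHermite_self, stdGaussianIntegral_apply,
    stdGaussianIntegral_apply] at h
  simpa [sq] using h

end Polynomial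

lemma integral_indicator_one_sub_const_mul {α : Type*} [MeasurableSpace α] {μ : Measure α}
    {s : Set α} (hs : MeasurableSet s) {f : α → ℝ} (hf : Integrable f μ)
    (hf0 : ∫ x, f x ∂μ = 0) (c : ℝ) :
    ∫ x, (s.indicator 1 x - c) * f x ∂μ = ∫ x in s, f x ∂μ := by
  simp_rw [sub_mul, ← indicator_mul_left, Pi.one_apply, one_mul]
  rw [integral_sub ((integrable_indicator_iff hs).2 hf.integrableOn) (hf.const_mul c),
    integral_const_mul, hf0, mul_zero, sub_zero, integral_indicator hs]

/-- Increment bound for Hermite coefficients of indicator functions: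
`(η_k(t₀+δ) - η_k(t₀))² ≤ k! (F(t₀+δ) - F(t₀))`, where `F` is the distribution
function of `g(ξ)` with `ξ` standard Gaussian and `h_k` the k-th Hermite polynomial. -/
theorem hermite_coeff_increment_bound (g : ℝ → ℝ) (hg : Measurable g)
    (F : ℝ → ℝ)
    (hF : ∀ t : ℝ, F t =
      ∫ u : ℝ, (if g u ≤ t then (1 : ℝ) else 0) *
        (Real.exp (-u ^ 2 / 2) / Real.sqrt (2 * Real.pi)))
    (k : ℕ) (hk : 1 ≤ k)
    (η : ℝ → ℝ)
    (hη : ∀ t : ℝ, η t =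
      ∫ u : ℝ, ((if g u ≤ t then (1 : ℝ) else 0) - F t) *
        (Polynomial.aeval u (Polynomial.hermite k)) *
        (Real.exp (-u ^ 2 / 2) / Real.sqrt (2 * Real.pi)))
    (t₀ δ : ℝ) (hδ : 0 < δ) :
    (η (t₀ + δ) - η t₀) ^ 2 ≤ (k.factorial : ℝ) * (F (t₀ + δ) - F t₀) := by
  have hS (t : ℝ) : MeasurableSet (g ⁻¹' Iic t) := hg measurableSet_Iic
  have hind (t u : ℝ) : (if g u ≤ t then (1 : ℝ) else 0) = (g ⁻¹' Iic t).indicator 1 u := rfl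
  have hF' (t : ℝ) : F t = (gaussianReal 0 1).real (g ⁻¹' Iic t) := by
    rw [hF, ← integral_gaussianReal_zero_one_eq_integral_mul]
    simp_rw [hind]
    exact integral_indicator_one (hS t)
  have hη' (t : ℝ) : η t = ∫ u in g ⁻¹' Iic t, (realHermite k).eval u ∂gaussianReal 0 1 := by
    rw [hη, ← integral_gaussianReal_zero_one_eq_integral_mul]
    simp_rw [hind, aeval_hermite]
    exact integral_indicator_one_sub_const_mul (hS t) (integrable_eval_gaussianReal _ 0 1)
      (integral_eval_realHermite (by omega)) _
  rw [hη', hη', hF', hF', mul_comm, ← integral_eval_realHermite_sq]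
  exact sq_setIntegral_sub_setIntegral_le (preimage_mono (Iic_subset_Iic.2 (by linarith)))
    (hS t₀) (memLp_eval_gaussianReal _ 0 1)
end
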